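/- arXiv:nlin/0510020 — 3 statements merged into one kernel-verified Lean document; each statement's English description precedes it below -/
import Mathlib

section
/- Let u, f, ψ be smooth real functions on ℝ² with ψ_y = ψ_{xx} + u·ψ, f_y = f_{xx} + u·f, and f nowhere vanishing. Then ψ̃ := f·(ψ/f)_x satisfies ψ̃_y = ψ̃_{xx} + ũ·ψ̃, where ũ := u + 2(f_x/f)_x. (Darboux covariance of the first Lax equation of the KPHSCS under the gauge transformation T_1[f]; a claim established in the proof of Theorem 5.1.) -/
noncomputable section

abbrev Pt2 : Type := ℝ × ℝ

/-- partial derivative in the first coordinate `x`. -/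
def px (F : Pt2 → ℝ) : Pt2 → ℝ := fun p => deriv (fun s => F (s, p.2)) p.1

/-- partial derivative in the second coordinate `y`. -/
def py (F : Pt2 → ℝ) : Pt2 → ℝ := fun p => deriv (fun s => F (p.1, s)) p.2

lemma hasDerivAt_sliceX {F : Pt2 → ℝ} (hF : ContDiff ℝ (⊤ : ℕ∞) F) (p : Pt2) :
    HasDerivAt (fun s => F (s, p.2)) (fderiv ℝ F p ((1:ℝ), (0:ℝ))) p.1 := by
  have h1 : HasDerivAt (fun s : ℝ => ((s, p.2) : Pt2)) ((1:ℝ), (0:ℝ)) p.1 :=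
    (hasDerivAt_id p.1).prodMk (hasDerivAt_const p.1 p.2)
  have h2 : HasFDerivAt F (fderiv ℝ F p) ((p.1 : ℝ), p.2) := by
    simpa using (hF.differentiable (by simp) p).hasFDerivAt
  exact h2.comp_hasDerivAt p.1 h1

lemma hasDerivAt_sliceY {F : Pt2 → ℝ} (hF : ContDiff ℝ (⊤ : ℕ∞) F) (p : Pt2) :
    HasDerivAt (fun t => F (p.1, t)) (fderiv ℝ F p ((0:ℝ), (1:ℝ))) p.2 := by
  have h1 : HasDerivAt (fun t : ℝ => ((p.1, t) : Pt2)) ((0:ℝ), (1:ℝ)) p.2 :=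
    (hasDerivAt_const p.2 p.1).prodMk (hasDerivAt_id p.2)
  have h2 : HasFDerivAt F (fderiv ℝ F p) ((p.1 : ℝ), p.2) := by
    simpa using (hF.differentiable (by simp) p).hasFDerivAt
  exact h2.comp_hasDerivAt p.2 h1

lemma px_eq {F : Pt2 → ℝ} (hF : ContDiff ℝ (⊤ : ℕ∞) F) (p : Pt2) :
    px F p = fderiv ℝ F p ((1:ℝ), (0:ℝ)) := (hasDerivAt_sliceX hF p).deriv

lemma py_eq {F : Pt2 → ℝ} (hF : ContDiff ℝ (⊤ : ℕ∞) F) (p : Pt2) :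
    py F p = fderiv ℝ F p ((0:ℝ), (1:ℝ)) := (hasDerivAt_sliceY hF p).deriv

lemma contDiff_px {F : Pt2 → ℝ} (hF : ContDiff ℝ (⊤ : ℕ∞) F) : ContDiff ℝ (⊤ : ℕ∞) (px F) := by
  have : px F = fun p => fderiv ℝ F p ((1:ℝ), (0:ℝ)) := funext (px_eq hF)
  rw [this]
  exact (hF.fderiv_right (by simp)).clm_apply contDiff_const

lemma contDiff_py {F : Pt2 → ℝ} (hF : ContDiff ℝ (⊤ : ℕ∞) F) : ContDiff ℝ (⊤ : ℕ∞) (py F) := by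
  have : py F = fun p => fderiv ℝ F p ((0:ℝ), (1:ℝ)) := funext (py_eq hF)
  rw [this]
  exact (hF.fderiv_right (by simp)).clm_apply contDiff_const

lemma diff_sliceX {F : Pt2 → ℝ} (hF : ContDiff ℝ (⊤ : ℕ∞) F) (p : Pt2) :
    DifferentiableAt ℝ (fun s => F (s, p.2)) p.1 :=
  (hasDerivAt_sliceX hF p).differentiableAt

lemma diff_sliceY {F : Pt2 → ℝ} (hF : ContDiff ℝ (⊤ : ℕ∞) F) (p : Pt2) :
    DifferentiableAt ℝ (fun t => F (p.1, t)) p.2 :=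
  (hasDerivAt_sliceY hF p).differentiableAt

lemma px_mul {F G : Pt2 → ℝ} (hF : ContDiff ℝ (⊤ : ℕ∞) F) (hG : ContDiff ℝ (⊤ : ℕ∞) G) (p : Pt2) :
    px (fun q => F q * G q) p = px F p * G p + F p * px G p := by
  simpa [px] using deriv_fun_mul (diff_sliceX hF p) (diff_sliceX hG p)

lemma py_mul {F G : Pt2 → ℝ} (hF : ContDiff ℝ (⊤ : ℕ∞) F) (hG : ContDiff ℝ (⊤ : ℕ∞) G) (p : Pt2) :
    py (fun q => F q * G q) p = py F p * G p + F p * py G p := by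
  simpa [py] using deriv_fun_mul (diff_sliceY hF p) (diff_sliceY hG p)

lemma px_sub {F G : Pt2 → ℝ} (hF : ContDiff ℝ (⊤ : ℕ∞) F) (hG : ContDiff ℝ (⊤ : ℕ∞) G) (p : Pt2) :
    px (fun q => F q - G q) p = px F p - px G p := by
  simpa [px] using deriv_fun_sub (diff_sliceX hF p) (diff_sliceX hG p)

lemma py_sub {F G : Pt2 → ℝ} (hF : ContDiff ℝ (⊤ : ℕ∞) F) (hG : ContDiff ℝ (⊤ : ℕ∞) G) (p : Pt2) :
    py (fun q => F q - G q) p = py F p - py G p := by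
  simpa [py] using deriv_fun_sub (diff_sliceY hF p) (diff_sliceY hG p)

lemma px_add {F G : Pt2 → ℝ} (hF : ContDiff ℝ (⊤ : ℕ∞) F) (hG : ContDiff ℝ (⊤ : ℕ∞) G) (p : Pt2) :
    px (fun q => F q + G q) p = px F p + px G p := by
  simpa [px] using deriv_fun_add (diff_sliceX hF p) (diff_sliceX hG p)

lemma px_div {F G : Pt2 → ℝ} (hF : ContDiff ℝ (⊤ : ℕ∞) F) (hG : ContDiff ℝ (⊤ : ℕ∞) G)
    (p : Pt2) (h0 : G p ≠ 0) :
    px (fun q => F q / G q) p = (px F p * G p - F p * px G p) / G p ^ 2 := by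
  simpa [px] using deriv_fun_div (diff_sliceX hF p) (diff_sliceX hG p) h0

lemma py_div {F G : Pt2 → ℝ} (hF : ContDiff ℝ (⊤ : ℕ∞) F) (hG : ContDiff ℝ (⊤ : ℕ∞) G)
    (p : Pt2) (h0 : G p ≠ 0) :
    py (fun q => F q / G q) p = (py F p * G p - F p * py G p) / G p ^ 2 := by
  simpa [py] using deriv_fun_div (diff_sliceY hF p) (diff_sliceY hG p) h0

lemma px_py_comm {F : Pt2 → ℝ} (hF : ContDiff ℝ (⊤ : ℕ∞) F) (p : Pt2) :
    px (py F) p = py (px F) p := by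
  have hd : ContDiff ℝ (⊤ : ℕ∞) (fderiv ℝ F) := hF.fderiv_right (by simp)
  have h1 : px (py F) p = fderiv ℝ (fderiv ℝ F) p (1, 0) (0, 1) := by
    rw [px_eq (contDiff_py hF) p,
      show py F = fun q => fderiv ℝ F q ((0:ℝ),(1:ℝ)) from funext (py_eq hF),
      fderiv_clm_apply (hd.differentiable (by simp) p) (differentiableAt_const _)]
    simp
  have h2 : py (px F) p = fderiv ℝ (fderiv ℝ F) p (0, 1) (1, 0) := by
    rw [py_eq (contDiff_px hF) p,
      show px F = fun q => fderiv ℝ F q ((1:ℝ),(0:ℝ)) from funext (px_eq hF),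
      fderiv_clm_apply (hd.differentiable (by simp) p) (differentiableAt_const _)]
    simp
  rw [h1, h2]
  exact hF.contDiffAt.isSymmSndFDerivAt (by rw [minSmoothness_of_isRCLikeNormedField]; exact WithTop.coe_le_coe.mpr (le_top : (2 : ℕ∞) ≤ ⊤)) _ _

set_option maxHeartbeats 2000000 in
theorem kp_lax_darboux_T1 (u f ψ : Pt2 → ℝ)
    (hu : ContDiff ℝ (⊤ : ℕ∞) u) (hf : ContDiff ℝ (⊤ : ℕ∞) f) (hψ : ContDiff ℝ (⊤ : ℕ∞) ψ)
    (hψeq : ∀ p : Pt2, py ψ p = px (px ψ) p + u p * ψ p)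
    (hfeq : ∀ p : Pt2, py f p = px (px f) p + u p * f p)
    (hf0 : ∀ p : Pt2, f p ≠ 0) :
    ∀ p : Pt2,
      py (fun p' => f p' * px (fun p'' => ψ p'' / f p'') p') p
        = px (px (fun p' => f p' * px (fun p'' => ψ p'' / f p'') p')) p
          + (u p + 2 * px (fun p' => px f p' / f p') p)
            * (f p * px (fun p' => ψ p' / f p') p) := by
  intro p
  -- g := px f / f smooth
  have hg : ContDiff ℝ (⊤ : ℕ∞) (fun q => px f q / f q) := (contDiff_px hf).div hf hf0
  have hgψ : ContDiff ℝ (⊤ : ℕ∞) (fun q => px f q / f q * ψ q) := hg.mul hψ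
  -- Step A : rewrite ψ̃ = px ψ - (px f / f) ψ
  have hfn : (fun p' => f p' * px (fun p'' => ψ p'' / f p'') p')
      = fun q => px ψ q - px f q / f q * ψ q := by
    funext q
    rw [px_div hψ hf q (hf0 q)]
    field_simp [hf0 q]
  have h3 : f p * px (fun p' => ψ p' / f p') p = px ψ p - px f p / f p * ψ p := by
    rw [px_div hψ hf p (hf0 p)]
    field_simp [hf0 p]
  rw [hfn, h3]
  -- LHS expansion
  have E1 : py (fun q => px ψ q - px f q / f q * ψ q) p
      = py (px ψ) p - py (fun q => px f q / f q * ψ q) p :=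
    py_sub (contDiff_px hψ) hgψ p
  have E2 : py (fun q => px f q / f q * ψ q) p
      = py (fun q => px f q / f q) p * ψ p + px f p / f p * py ψ p :=
    py_mul hg hψ p
  have E3 : py (fun q => px f q / f q) p
      = (py (px f) p * f p - px f p * py f p) / f p ^ 2 :=
    py_div (contDiff_px hf) hf p (hf0 p)
  -- cross-derivative substitutions
  have e4a : px (fun q => px (px ψ) q + u q * ψ q) p
      = px (px (px ψ)) p + px (fun q => u q * ψ q) p :=
    px_add (contDiff_px (contDiff_px hψ)) (hu.mul hψ) p
  have e4b : px (fun q => u q * ψ q) p = px u p * ψ p + u p * px ψ p := px_mul hu hψ p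
  have E4 : py (px ψ) p = px (px (px ψ)) p + (px u p * ψ p + u p * px ψ p) := by
    rw [← px_py_comm hψ p,
      show py ψ = fun q => px (px ψ) q + u q * ψ q from funext hψeq, e4a, e4b]
  have e5a : px (fun q => px (px f) q + u q * f q) p
      = px (px (px f)) p + px (fun q => u q * f q) p :=
    px_add (contDiff_px (contDiff_px hf)) (hu.mul hf) p
  have e5b : px (fun q => u q * f q) p = px u p * f p + u p * px f p := px_mul hu hf p
  have E5 : py (px f) p = px (px (px f)) p + (px u p * f p + u p * px f p) := by
    rw [← px_py_comm hf p,
      show py f = fun q => px (px f) q + u q * f q from funext hfeq, e5a, e5b]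
  -- first x-derivative of ψ̃ as a function
  have P1 : px (fun q => px ψ q - px f q / f q * ψ q)
      = fun q => px (px ψ) q
          - ((px (px f) q * f q - px f q * px f q) / (f q * f q) * ψ q
            + px f q / f q * px ψ q) := by
    funext q
    have a1 : px (fun r => px ψ r - px f r / f r * ψ r) q
        = px (px ψ) q - px (fun r => px f r / f r * ψ r) q :=
      px_sub (contDiff_px hψ) hgψ q
    have a2 : px (fun r => px f r / f r * ψ r) q
        = px (fun r => px f r / f r) q * ψ q + px f q / f q * px ψ q :=
      px_mul hg hψ q
    have a3 : px (fun r => px f r / f r) q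
        = (px (px f) q * f q - px f q * px f q) / f q ^ 2 :=
      px_div (contDiff_px hf) hf q (hf0 q)
    rw [a1, a2, a3, pow_two]
  rw [P1]
  -- smoothness pieces for second derivative
  have hN : ContDiff ℝ (⊤ : ℕ∞) (fun q => px (px f) q * f q - px f q * px f q) :=
    ((contDiff_px (contDiff_px hf)).mul hf).sub ((contDiff_px hf).mul (contDiff_px hf))
  have hD : ContDiff ℝ (⊤ : ℕ∞) (fun q => f q * f q) := hf.mul hf
  have hD0 : ∀ q : Pt2, f q * f q ≠ 0 := fun q => mul_ne_zero (hf0 q) (hf0 q)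
  have hQ : ContDiff ℝ (⊤ : ℕ∞) (fun q => (px (px f) q * f q - px f q * px f q) / (f q * f q)) :=
    hN.div hD hD0
  have hgψx : ContDiff ℝ (⊤ : ℕ∞) (fun q => px f q / f q * px ψ q) := hg.mul (contDiff_px hψ)
  -- second x-derivative expansion
  have Q1 : px (fun q => px (px ψ) q
        - ((px (px f) q * f q - px f q * px f q) / (f q * f q) * ψ q
          + px f q / f q * px ψ q)) p
      = px (px (px ψ)) p
        - px (fun q => (px (px f) q * f q - px f q * px f q) / (f q * f q) * ψ q
            + px f q / f q * px ψ q) p :=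
    px_sub (contDiff_px (contDiff_px hψ)) ((hQ.mul hψ).add hgψx) p
  have Q1' : px (fun q => (px (px f) q * f q - px f q * px f q) / (f q * f q) * ψ q
        + px f q / f q * px ψ q) p
      = px (fun q => (px (px f) q * f q - px f q * px f q) / (f q * f q) * ψ q) p
        + px (fun q => px f q / f q * px ψ q) p :=
    px_add (hQ.mul hψ) hgψx p
  have Q2 : px (fun q => (px (px f) q * f q - px f q * px f q) / (f q * f q) * ψ q) p
      = px (fun q => (px (px f) q * f q - px f q * px f q) / (f q * f q)) p * ψ p
        + (px (px f) p * f p - px f p * px f p) / (f p * f p) * px ψ p :=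
    px_mul hQ hψ p
  have Q3 : px (fun q => (px (px f) q * f q - px f q * px f q) / (f q * f q)) p
      = (px (fun q => px (px f) q * f q - px f q * px f q) p * (f p * f p)
          - (px (px f) p * f p - px f p * px f p) * px (fun q => f q * f q) p)
        / (f p * f p) ^ 2 :=
    px_div hN hD p (hD0 p)
  have Q4a : px (fun q => px (px f) q * f q - px f q * px f q) p
      = px (fun q => px (px f) q * f q) p - px (fun q => px f q * px f q) p :=
    px_sub ((contDiff_px (contDiff_px hf)).mul hf) ((contDiff_px hf).mul (contDiff_px hf)) p
  have Q4b : px (fun q => px (px f) q * f q) p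
      = px (px (px f)) p * f p + px (px f) p * px f p :=
    px_mul (contDiff_px (contDiff_px hf)) hf p
  have Q4c : px (fun q => px f q * px f q) p
      = px (px f) p * px f p + px f p * px (px f) p :=
    px_mul (contDiff_px hf) (contDiff_px hf) p
  have Q5 : px (fun q => f q * f q) p = px f p * f p + f p * px f p := px_mul hf hf p
  have Q6 : px (fun q => px f q / f q * px ψ q) p
      = px (fun q => px f q / f q) p * px ψ p + px f p / f p * px (px ψ) p :=
    px_mul hg (contDiff_px hψ) p
  have hgx : px (fun q => px f q / f q) p
      = (px (px f) p * f p - px f p * px f p) / f p ^ 2 :=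
    px_div (contDiff_px hf) hf p (hf0 p)
  rw [E1, E2, E3, E4, E5, Q1, Q1', Q2, Q3, Q4a, Q4b, Q4c, Q5, Q6, hgx,
    hψeq p, hfeq p]
  field_simp [hf0 p]
  ring_nf
end
end

section
/- Let v, g, φ, P be smooth real functions on ℝ² with φ_y = φ_{xx} + 2v·φ_x, g_y = −g_{xx} + 2v·g_x, P_x = g_x·φ, P_y = g_x·φ_x − g_{xx}·φ + 2v·g_x·φ, and g_x nowhere vanishing. Then φ̃ := P satisfies φ̃_y = φ̃_{xx} + 2ṽ·φ̃_x, where ṽ := v − g_{xx}/g_x. (Darboux covariance of the first Lax equation of the mKPHSCS under the gauge transformation G_3[g]; a claim established in the proof of Theorem 6.3.) -/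
noncomputable section

lemma hasDerivAt_px (F : Pt2 → ℝ) (hF : Differentiable ℝ F) (p : Pt2) :
    HasDerivAt (fun s => F (s, p.2)) (fderiv ℝ F p (1, 0)) p.1 := by
  have h1 : HasDerivAt (fun s : ℝ => (s, p.2)) ((1 : ℝ), (0 : ℝ)) p.1 :=
    (hasDerivAt_id p.1).prodMk (hasDerivAt_const _ _)
  have := (hF p).hasFDerivAt.comp_hasDerivAt p.1 h1
  exact this

lemma px_eq_fderiv (F : Pt2 → ℝ) (hF : ContDiff ℝ (⊤ : ℕ∞) F) :
    px F = fun p => fderiv ℝ F p (1, 0) := by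
  funext p
  exact (hasDerivAt_px F (hF.differentiable (by simp)) p).deriv

lemma px_contDiff (F : Pt2 → ℝ) (hF : ContDiff ℝ (⊤ : ℕ∞) F) : ContDiff ℝ (⊤ : ℕ∞) (px F) := by
  rw [px_eq_fderiv F hF]
  exact (hF.fderiv_right (by simp)).clm_apply contDiff_const

theorem mkp_lax_darboux_G3 (v g φ P : Pt2 → ℝ)
    (hv : ContDiff ℝ (⊤ : ℕ∞) v) (hg : ContDiff ℝ (⊤ : ℕ∞) g) (hφ : ContDiff ℝ (⊤ : ℕ∞) φ)
    (hP : ContDiff ℝ (⊤ : ℕ∞) P)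
    (hφeq : ∀ p : Pt2, py φ p = px (px φ) p + 2 * v p * px φ p)
    (hgeq : ∀ p : Pt2, py g p = -(px (px g) p) + 2 * v p * px g p)
    (hPx : ∀ p : Pt2, px P p = px g p * φ p)
    (hPy : ∀ p : Pt2, py P p = px g p * px φ p - px (px g) p * φ p + 2 * v p * px g p * φ p)
    (hgx0 : ∀ p : Pt2, px g p ≠ 0) :
    ∀ p : Pt2,
      py P p = px (px P) p
        + 2 * (v p - px (px g) p / px g p) * px P p := by
  intro p
  have hgx : ContDiff ℝ (⊤ : ℕ∞) (px g) := px_contDiff g hg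
  have hPxfun : px P = fun q => px g q * φ q := funext hPx
  have hA : HasDerivAt (fun s => px g (s, p.2)) (px (px g) p) p.1 := by
    have h := hasDerivAt_px (px g) (hgx.differentiable (by simp)) p
    rwa [← congrFun (px_eq_fderiv (px g) hgx) p] at h
  have hB : HasDerivAt (fun s => φ (s, p.2)) (px φ p) p.1 := by
    have h := hasDerivAt_px φ (hφ.differentiable (by simp)) p
    rwa [← congrFun (px_eq_fderiv φ hφ) p] at h
  have hPxx : px (px P) p = px (px g) p * φ p + px g p * px φ p := by
    rw [hPxfun]
    show deriv (fun s => px g (s, p.2) * φ (s, p.2)) p.1 = _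
    exact (hA.mul hB).deriv
  rw [hPy p, hPxx, hPx p]
  field_simp [hgx0 p]
  ring
end
end

section
/- Let u, g, ψ, P be smooth real functions on ℝ² with ψ_y = ψ_{xx} + u·ψ, g_y = −g_{xx} − u·g, P_x = g·ψ, P_y = ψ_x·g − ψ·g_x, and g nowhere vanishing. Then φ := P satisfies φ_y = φ_{xx} + 2ṽ·φ_x, where ṽ := −g_x/g. (The Miura-type map M_2[g] produces an eigenfunction φ = D^{-1}(gψ) of the mKP-type Lax equation from an eigenfunction ψ of the KP-type Lax equation; a claim established in the proof of Theorem 7.2.) -/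
noncomputable section

lemma diffAt_x (F : Pt2 → ℝ) (hF : ContDiff ℝ (⊤ : ℕ∞) F) (a b : ℝ) :
    DifferentiableAt ℝ (fun s => F (s, b)) a :=
  (hF.differentiable (by simp) (a, b)).comp a
    (DifferentiableAt.prodMk differentiableAt_id (differentiableAt_const b))

theorem kp_to_mkp_eigenfunction_M2 (u g ψ P : Pt2 → ℝ)
    (hu : ContDiff ℝ (⊤ : ℕ∞) u) (hg : ContDiff ℝ (⊤ : ℕ∞) g) (hψ : ContDiff ℝ (⊤ : ℕ∞) ψ)
    (hP : ContDiff ℝ (⊤ : ℕ∞) P)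
    (hψeq : ∀ p : Pt2, py ψ p = px (px ψ) p + u p * ψ p)
    (hgeq : ∀ p : Pt2, py g p = -(px (px g) p) - u p * g p)
    (hPx : ∀ p : Pt2, px P p = g p * ψ p)
    (hPy : ∀ p : Pt2, py P p = px ψ p * g p - ψ p * px g p)
    (hg0 : ∀ p : Pt2, g p ≠ 0) :
    ∀ p : Pt2,
      py P p = px (px P) p + 2 * (-(px g p / g p)) * px P p := by
  intro p
  obtain ⟨a, b⟩ := p
  have hPxfun : px P = fun q => g q * ψ q := funext hPx
  have h2 : px (px P) (a, b) = px g (a, b) * ψ (a, b) + g (a, b) * px ψ (a, b) := by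
    rw [hPxfun]
    show deriv (fun s => g (s, b) * ψ (s, b)) a = _
    rw [deriv_fun_mul (diffAt_x g hg a b) (diffAt_x ψ hψ a b)]
    rfl
  rw [hPy, h2, hPx]
  field_simp [hg0 (a, b)]
  ring
end
end
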